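/- Let Q = (Q_{ij})_{i,j≥1} be a substochastic matrix on the positive integers satisfying the spectral hypothesis (with data ρ, u, v, ν, K, ε and S⁽ⁿ⁾ := Qⁿ − ρⁿ v uᵀ). For i ≥ 1, 0 ≤ ℓ ≤ n with (Qⁿ𝟙)_i > 0, and x = (x_1,…,x_ℓ) ∈ {1,2,…}^ℓ (x_0 := i), define the conditioned path law p_i^{(ℓ,n)}(x) := (Π_{u=1}^{ℓ} Q_{x_{u-1}x_u}) · (Q^{n−ℓ}𝟙)_{x_ℓ} / (Qⁿ𝟙)_i, the Q-process path law p_i^{(ℓ,↑)}(x) := ρ^{−ℓ} v_i^{−1} (Π_{u=1}^{ℓ} Q_{x_{u-1}x_u}) v_{x_ℓ}, and the total variation distance d_ℓ^{(n)}(i) := (1/2) Σ_{x ∈ {1,2,…}^ℓ} | p_i^{(ℓ,n)}(x) − p_i^{(ℓ,↑)}(x) |. Then for every i ≥ 1 and every fixed k ≥ 1, lim_{n→∞} d_{n−k}^{(n)}(i) = (ρ^{−k}/2) Σ_{j=1}^{∞} u_j | (S⁽ᵏ⁾𝟙)_j |. -/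

import Mathlib

/-!
Grouping the paths of length `n - k` by their endpoint `j`, `d_{n-k}^{(n)}(i)` becomes half the
ℓ¹ distance between the probability vectors `aₙ(j) = Q^{n-k}_{ij} (Q^k𝟙)_j / (Qⁿ𝟙)_i` and
`bₙ(j) = ρ^{-(n-k)} Q^{n-k}_{ij} v_j / v_i` (Chapman–Kolmogorov and `Qv = ρv`). The spectral
bounds give `ρ^{-m} Q^m_{ij} → v_i u_j` and `ρ^{-n} (Qⁿ𝟙)_i → v_i`, so `aₙ` and `bₙ` converge
pointwise to the probability vectors `ρ^{-k} u_j (Q^k𝟙)_j` and `u_j v_j` (by `uᵀQ = ρuᵀ`). By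
Scheffé's lemma the convergence holds in ℓ¹, so the distance converges to
`½ Σ_j u_j |ρ^{-k} (Q^k𝟙)_j - v_j| = (ρ^{-k}/2) Σ_j u_j |(S⁽ᵏ⁾𝟙)_j|`.

Nonnegative series are rearranged in `ℝ≥0∞`, where summations can be interchanged freely.
-/

open Filter Topology

/-- `n`-th power of an infinite matrix indexed by the positive integers. -/
noncomputable def matpow (Q : ℕ+ → ℕ+ → ℝ) : ℕ → ℕ+ → ℕ+ → ℝ
  | 0 => fun i j => if i = j then 1 else 0
  | n + 1 => fun i j => ∑' k : ℕ+, matpow Q n i k * Q k j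

/-- `(Qⁿ𝟙)ᵢ`. -/
noncomputable def rowSum (Q : ℕ+ → ℕ+ → ℝ) (n : ℕ) (i : ℕ+) : ℝ :=
  ∑' j : ℕ+, matpow Q n i j

/-- The product `Q_{x₀x₁}Q_{x₁x₂}⋯Q_{x_{ℓ-1}x_ℓ}` along a path `x : Fin ℓ → ℕ+`
started at `x₀ = i`. -/
noncomputable def pathProd (Q : ℕ+ → ℕ+ → ℝ) (i : ℕ+) {ℓ : ℕ} (x : Fin ℓ → ℕ+) : ℝ :=
  ∏ u : Fin ℓ,
    Q (if h : u.val = 0 then i else x ⟨u.val - 1, lt_of_le_of_lt (Nat.sub_le _ _) u.isLt⟩) (x u)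

/-- The final state `x_ℓ` of a path (equal to `i` when `ℓ = 0`). -/
def lastState (i : ℕ+) {ℓ : ℕ} (x : Fin ℓ → ℕ+) : ℕ+ :=
  if h : ℓ = 0 then i else x ⟨ℓ - 1, by omega⟩

/-- `p_i^{(ℓ,n)}(x)`: the law of the first `ℓ` steps of the chain started at `i`,
conditioned on survival up to time `n`. -/
noncomputable def condPathLaw (Q : ℕ+ → ℕ+ → ℝ) (i : ℕ+) (n : ℕ) {ℓ : ℕ}
    (x : Fin ℓ → ℕ+) : ℝ :=
  pathProd Q i x * rowSum Q (n - ℓ) (lastState i x) / rowSum Q n i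

/-- `p_i^{(ℓ,↑)}(x)`: the law of the first `ℓ` steps of the `Q`-process started at `i`. -/
noncomputable def qPathLaw (Q : ℕ+ → ℕ+ → ℝ) (ρ : ℝ) (v : ℕ+ → ℝ) (i : ℕ+) {ℓ : ℕ}
    (x : Fin ℓ → ℕ+) : ℝ :=
  (ρ ^ ℓ)⁻¹ * (v i)⁻¹ * (pathProd Q i x * v (lastState i x))

/-- `d_ℓ^{(n)}(i)`: total variation distance between the two path laws. -/
noncomputable def tvDist (Q : ℕ+ → ℕ+ → ℝ) (ρ : ℝ) (v : ℕ+ → ℝ) (i : ℕ+) (ℓ n : ℕ) : ℝ :=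
  (1 / 2) * ∑' x : Fin ℓ → ℕ+, |condPathLaw Q i n x - qPathLaw Q ρ v i x|

/-- `(S⁽ⁿ⁾𝟙)ᵢ` where `S⁽ⁿ⁾ = Qⁿ - ρⁿ v uᵀ`. -/
noncomputable def Sone (Q : ℕ+ → ℕ+ → ℝ) (ρ : ℝ) (v u : ℕ+ → ℝ) (n : ℕ) (i : ℕ+) : ℝ :=
  ∑' j : ℕ+, (matpow Q n i j - ρ ^ n * v i * u j)

open scoped ENNReal

lemma hasSum_of_tsum_ofReal_eq {α : Type*} {f : α → ℝ} {c : ℝ} (hf : ∀ a, 0 ≤ f a) (hc : 0 ≤ c)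
    (h : ∑' a, ENNReal.ofReal (f a) = ENNReal.ofReal c) : HasSum f c := by
  have hs : Summable f := by
    refine (ENNReal.summable_toReal (h ▸ ENNReal.ofReal_ne_top)).congr fun a => ?_
    exact ENNReal.toReal_ofReal (hf a)
  rw [← ENNReal.ofReal_tsum_of_nonneg hf hs, ENNReal.ofReal_eq_ofReal_iff (tsum_nonneg hf) hc] at h
  exact h ▸ hs.hasSum

lemma tendsto_div_pow_of_abs_sub_le {x : ℕ → ℝ} {ρ θ c C : ℝ} (hρ : 0 < ρ) (hθ0 : 0 ≤ θ)
    (hθ1 : θ < 1) (h : ∀ᶠ n in atTop, |x n - ρ ^ n * c| ≤ C * θ ^ n * ρ ^ n) :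
    Tendsto (fun n => x n / ρ ^ n) atTop (𝓝 c) := by
  rw [tendsto_iff_norm_sub_tendsto_zero]
  refine squeeze_zero' (Eventually.of_forall fun n => norm_nonneg _) ?_
    (by simpa using (tendsto_pow_atTop_nhds_zero_of_lt_one hθ0 hθ1).const_mul C)
  filter_upwards [h] with n hn
  have hρn := pow_pos hρ n
  rw [Real.norm_eq_abs, show x n / ρ ^ n - c = (x n - ρ ^ n * c) / ρ ^ n by field_simp,
    abs_div, abs_of_pos hρn, div_le_iff₀ hρn]
  exact hn

/-- Scheffé's lemma for series. -/
lemma tendsto_tsum_abs_sub_nhds_zero {ι α : Type*} {l : Filter ι} [l.NeBot]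
    {f : ι → α → ℝ} {g : α → ℝ} (hf : ∀ n a, 0 ≤ f n a) (hfs : ∀ n, Summable (f n))
    (hg : Summable g) (hlim : ∀ a, Tendsto (f · a) l (𝓝 (g a)))
    (hsum : Tendsto (fun n => ∑' a, f n a) l (𝓝 (∑' a, g a))) :
    Tendsto (fun n => ∑' a, |f n a - g a|) l (𝓝 0) := by
  have hg0 : ∀ a, 0 ≤ g a := fun a => ge_of_tendsto' (hlim a) fun n => hf n a
  have hdeficit_le : ∀ n a, max (g a - f n a) 0 ≤ g a := fun n a =>
    max_le (by linarith [hf n a]) (hg0 a)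
  have hdeficit_summable : ∀ n, Summable fun a => max (g a - f n a) 0 := fun n =>
    hg.of_nonneg_of_le (fun a => le_max_right _ _) (hdeficit_le n)
  -- `|fₙ - g| = (fₙ - g) + 2 (g - fₙ)⁺`, and `(g - fₙ)⁺ ≤ g` tends to `0` by dominated convergence.
  have hdeficit : Tendsto (fun n => ∑' a, max (g a - f n a) 0) l (𝓝 0) := by
    have := tendsto_tsum_of_dominated_convergence hg
      (fun a => (tendsto_const_nhds.sub (hlim a)).max tendsto_const_nhds)
      (Eventually.of_forall fun n a => by
        rw [Real.norm_eq_abs, abs_of_nonneg (le_max_right _ _)]; exact hdeficit_le n a)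
    simpa using this
  have habs : ∀ n, ∑' a, |f n a - g a|
      = (∑' a, f n a - ∑' a, g a) + 2 * ∑' a, max (g a - f n a) 0 := by
    intro n
    rw [← (hfs n).tsum_sub hg, ← tsum_mul_left, ← ((hfs n).sub hg).tsum_add
      ((hdeficit_summable n).mul_left 2)]
    congr 1 with a
    rcases le_total (f n a) (g a) with h | h
    · rw [abs_of_nonpos (by linarith), max_eq_left (by linarith)]; ring
    · rw [abs_of_nonneg (by linarith), max_eq_right (by linarith)]; ring
  simp only [habs]
  simpa using (hsum.sub_const (∑' a, g a)).add (hdeficit.const_mul 2)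

lemma tendsto_tsum_abs_sub_of_tendsto_tsum {ι α : Type*} {l : Filter ι} [l.NeBot]
    {f g : ι → α → ℝ} {f' g' : α → ℝ} (hf : ∀ n a, 0 ≤ f n a) (hg : ∀ n a, 0 ≤ g n a)
    (hfs : ∀ n, Summable (f n)) (hgs : ∀ n, Summable (g n))
    (hf's : Summable f') (hg's : Summable g')
    (hflim : ∀ a, Tendsto (f · a) l (𝓝 (f' a))) (hglim : ∀ a, Tendsto (g · a) l (𝓝 (g' a)))
    (hfsum : Tendsto (fun n => ∑' a, f n a) l (𝓝 (∑' a, f' a)))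
    (hgsum : Tendsto (fun n => ∑' a, g n a) l (𝓝 (∑' a, g' a))) :
    Tendsto (fun n => ∑' a, |f n a - g n a|) l (𝓝 (∑' a, |f' a - g' a|)) := by
  have hf_l1 := tendsto_tsum_abs_sub_nhds_zero hf hfs hf's hflim hfsum
  have hg_l1 := tendsto_tsum_abs_sub_nhds_zero hg hgs hg's hglim hgsum
  rw [tendsto_iff_norm_sub_tendsto_zero]
  refine squeeze_zero (fun n => norm_nonneg _) (fun n => ?_) (by simpa using hf_l1.add hg_l1)
  have hpt : ∀ a, ‖|f n a - g n a| - |f' a - g' a|‖ ≤ |f n a - f' a| + |g n a - g' a| :=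
    fun a => (abs_abs_sub_abs_le_abs_sub _ _).trans (by
      rw [show f n a - g n a - (f' a - g' a) = (f n a - f' a) - (g n a - g' a) by ring]
      exact abs_sub _ _)
  have hs : Summable fun a => |f n a - g n a| - |f' a - g' a| :=
    ((hfs n).sub (hgs n)).abs.sub (hf's.sub hg's).abs
  rw [← ((hfs n).sub (hgs n)).abs.tsum_sub (hf's.sub hg's).abs,
    ← ((hfs n).sub hf's).abs.tsum_add ((hgs n).sub hg's).abs]
  exact (norm_tsum_le_tsum_norm hs.norm).trans (hs.norm.tsum_le_tsum hpt
    (((hfs n).sub hf's).abs.add ((hgs n).sub hg's).abs))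

section MatrixPowers

variable {Q : ℕ+ → ℕ+ → ℝ}

lemma matpow_nonneg (hQ : ∀ i j, 0 ≤ Q i j) : ∀ n i j, 0 ≤ matpow Q n i j
  | 0, i, j => by unfold matpow; split_ifs <;> norm_num
  | n + 1, i, j => tsum_nonneg fun k => mul_nonneg (matpow_nonneg hQ n i k) (hQ k j)

lemma pathProd_nonneg (hQ : ∀ i j, 0 ≤ Q i j) (i : ℕ+) {ℓ : ℕ} (x : Fin ℓ → ℕ+) :
    0 ≤ pathProd Q i x :=
  Finset.prod_nonneg fun _ _ => hQ _ _

lemma rowSum_nonneg (hQ : ∀ i j, 0 ≤ Q i j) (n : ℕ) (i : ℕ+) : 0 ≤ rowSum Q n i :=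
  tsum_nonneg (matpow_nonneg hQ n i)

noncomputable def matpowMulVec (Q : ℕ+ → ℕ+ → ℝ) (n : ℕ) (g : ℕ+ → ℝ≥0∞) (i : ℕ+) : ℝ≥0∞ :=
  ∑' j, ENNReal.ofReal (matpow Q n i j) * g j

lemma matpowMulVec_zero (g : ℕ+ → ℝ≥0∞) : matpowMulVec Q 0 g = g := by
  funext i
  rw [matpowMulVec, tsum_eq_single i fun j hj => by simp [matpow, Ne.symm hj]]
  simp [matpow]

variable (hQ : ∀ i j, 0 ≤ Q i j) (hQs : ∀ i, Summable (Q i)) (hQr : ∀ i, ∑' j, Q i j ≤ 1)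
include hQ hQs hQr

lemma ofReal_matpow_succ {n : ℕ} {i : ℕ+} (hrow : Summable (matpow Q n i)) (j : ℕ+) :
    ENNReal.ofReal (matpow Q (n + 1) i j)
      = ∑' m, ENNReal.ofReal (matpow Q n i m) * ENNReal.ofReal (Q m j) := by
  have hQle : ∀ m, Q m j ≤ 1 := fun m => ((hQs m).le_tsum j fun k _ => hQ m k).trans (hQr m)
  rw [matpow, ENNReal.ofReal_tsum_of_nonneg
    (fun m => mul_nonneg (matpow_nonneg hQ n i m) (hQ m j))
    (hrow.of_nonneg_of_le (fun m => mul_nonneg (matpow_nonneg hQ n i m) (hQ m j))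
      fun m => mul_le_of_le_one_right (matpow_nonneg hQ n i m) (hQle m))]
  exact tsum_congr fun m => ENNReal.ofReal_mul (matpow_nonneg hQ n i m)

lemma summable_matpow_and_tsum_le_one :
    ∀ n i, Summable (matpow Q n i) ∧ ∑' j, matpow Q n i j ≤ 1
  | 0, i => by
    have hsingle : ∀ j ≠ i, matpow Q 0 i j = 0 := fun j hj => by simp [matpow, Ne.symm hj]
    refine ⟨summable_of_ne_finset_zero (s := {i}) fun j hj => hsingle j (by simpa using hj), ?_⟩
    rw [tsum_eq_single i hsingle]
    simp [matpow]
  | n + 1, i => by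
    obtain ⟨hrow, hle⟩ := summable_matpow_and_tsum_le_one n i
    have hsum : ∑' j, ENNReal.ofReal (matpow Q (n + 1) i j) ≤ 1 :=
      calc ∑' j, ENNReal.ofReal (matpow Q (n + 1) i j)
          = ∑' m, ENNReal.ofReal (matpow Q n i m) * ∑' j, ENNReal.ofReal (Q m j) := by
            simp_rw [ofReal_matpow_succ hQ hQs hQr hrow, ← ENNReal.tsum_mul_left]
            exact ENNReal.tsum_comm
        _ ≤ ∑' m, ENNReal.ofReal (matpow Q n i m) := by
            refine ENNReal.tsum_le_tsum fun m => mul_le_of_le_one_right' ?_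
            rw [← ENNReal.ofReal_tsum_of_nonneg (hQ m) (hQs m)]
            exact ENNReal.ofReal_le_one.2 (hQr m)
        _ ≤ 1 := by
            rw [← ENNReal.ofReal_tsum_of_nonneg (matpow_nonneg hQ n i) hrow]
            exact ENNReal.ofReal_le_one.2 hle
    have hrow' : Summable (matpow Q (n + 1) i) :=
      (ENNReal.summable_toReal (ne_top_of_le_ne_top ENNReal.one_ne_top hsum)).congr
        fun j => ENNReal.toReal_ofReal (matpow_nonneg hQ _ i j)
    refine ⟨hrow', ?_⟩
    rwa [← ENNReal.ofReal_tsum_of_nonneg (matpow_nonneg hQ _ i) hrow',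
      ENNReal.ofReal_le_one] at hsum

lemma summable_matpow (n : ℕ) (i : ℕ+) : Summable (matpow Q n i) :=
  (summable_matpow_and_tsum_le_one hQ hQs hQr n i).1

lemma matpowMulVec_succ (n : ℕ) (g : ℕ+ → ℝ≥0∞) :
    matpowMulVec Q (n + 1) g = matpowMulVec Q n fun m => ∑' j, ENNReal.ofReal (Q m j) * g j := by
  funext i
  simp_rw [matpowMulVec, ofReal_matpow_succ hQ hQs hQr (summable_matpow hQ hQs hQr n i),
    ← ENNReal.tsum_mul_right, ← ENNReal.tsum_mul_left, mul_assoc]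
  exact ENNReal.tsum_comm

lemma matpowMulVec_add (a b : ℕ) (g : ℕ+ → ℝ≥0∞) :
    matpowMulVec Q (a + b) g = matpowMulVec Q a (matpowMulVec Q b g) := by
  induction b generalizing g with
  | zero => rw [matpowMulVec_zero, Nat.add_zero]
  | succ b ih =>
    rw [← Nat.add_assoc, matpowMulVec_succ hQ hQs hQr, ih, matpowMulVec_succ hQ hQs hQr]

lemma ofReal_rowSum (n : ℕ) (i : ℕ+) :
    ENNReal.ofReal (rowSum Q n i) = matpowMulVec Q n 1 i := by
  simp [rowSum, matpowMulVec,
    ENNReal.ofReal_tsum_of_nonneg (matpow_nonneg hQ n i) (summable_matpow hQ hQs hQr n i)]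

lemma hasSum_matpow_mul_rowSum (a b : ℕ) (i : ℕ+) :
    HasSum (fun j => matpow Q a i j * rowSum Q b j) (rowSum Q (a + b) i) := by
  refine hasSum_of_tsum_ofReal_eq
    (fun j => mul_nonneg (matpow_nonneg hQ a i j) (rowSum_nonneg hQ b j))
    (rowSum_nonneg hQ _ i) ?_
  simp_rw [ENNReal.ofReal_mul (matpow_nonneg hQ a i _), ofReal_rowSum hQ hQs hQr,
    matpowMulVec_add hQ hQs hQr]
  rfl

lemma sone_eq_rowSum_sub {ρ : ℝ} {u : ℕ+ → ℝ} (hu : HasSum u 1) (v : ℕ+ → ℝ) (n : ℕ) (i : ℕ+) :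
    Sone Q ρ v u n i = rowSum Q n i - ρ ^ n * v i := by
  rw [Sone, (summable_matpow hQ hQs hQr n i).tsum_sub (hu.summable.mul_left _), tsum_mul_left,
    hu.tsum_eq, mul_one, rowSum]

end MatrixPowers

section Eigenvectors

variable {Q : ℕ+ → ℕ+ → ℝ} {ρ : ℝ}

lemma matpowMulVec_const_mul (n : ℕ) (c : ℝ≥0∞) (g : ℕ+ → ℝ≥0∞) (i : ℕ+) :
    matpowMulVec Q n (fun j => c * g j) i = c * matpowMulVec Q n g i := by
  simp_rw [matpowMulVec, mul_left_comm _ c, ENNReal.tsum_mul_left]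

variable (hQ : ∀ i j, 0 ≤ Q i j) (hQs : ∀ i, Summable (Q i)) (hQr : ∀ i, ∑' j, Q i j ≤ 1)
  (hρ : 0 ≤ ρ)
include hQ hQs hQr hρ

lemma matpowMulVec_eigenvector {v : ℕ+ → ℝ} (hv : ∀ j, 0 ≤ v j)
    (hv_eig : ∀ i, HasSum (fun j => Q i j * v j) (ρ * v i)) (n : ℕ) (i : ℕ+) :
    matpowMulVec Q n (fun j => ENNReal.ofReal (v j)) i = ENNReal.ofReal (ρ ^ n * v i) := by
  induction n generalizing i with
  | zero => simp [matpowMulVec_zero]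
  | succ n ih =>
    have hQv : ∀ m, ∑' j, ENNReal.ofReal (Q m j) * ENNReal.ofReal (v j)
        = ENNReal.ofReal ρ * ENNReal.ofReal (v m) := fun m => by
      rw [← ENNReal.ofReal_mul hρ, ← (hv_eig m).tsum_eq, ENNReal.ofReal_tsum_of_nonneg
        (fun j => mul_nonneg (hQ m j) (hv j)) (hv_eig m).summable]
      exact tsum_congr fun j => (ENNReal.ofReal_mul (hQ m j)).symm
    simp_rw [matpowMulVec_succ hQ hQs hQr, hQv, matpowMulVec_const_mul, ih,
      ← ENNReal.ofReal_mul hρ]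
    ring_nf

lemma tsum_mul_matpowMulVec {u : ℕ+ → ℝ} (hu : ∀ j, 0 ≤ u j)
    (hu_eig : ∀ j, HasSum (fun i => u i * Q i j) (ρ * u j)) (n : ℕ) (g : ℕ+ → ℝ≥0∞) :
    ∑' i, ENNReal.ofReal (u i) * matpowMulVec Q n g i
      = ENNReal.ofReal (ρ ^ n) * ∑' i, ENNReal.ofReal (u i) * g i := by
  induction n generalizing g with
  | zero => simp [matpowMulVec_zero]
  | succ n ih =>
    have huQ : ∀ j, ∑' i, ENNReal.ofReal (u i) * ENNReal.ofReal (Q i j)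
        = ENNReal.ofReal ρ * ENNReal.ofReal (u j) := fun j => by
      rw [← ENNReal.ofReal_mul hρ, ← (hu_eig j).tsum_eq, ENNReal.ofReal_tsum_of_nonneg
        (fun i => mul_nonneg (hu i) (hQ i j)) (hu_eig j).summable]
      exact tsum_congr fun i => (ENNReal.ofReal_mul (hu i)).symm
    have hQg : ∑' i, ENNReal.ofReal (u i) * ∑' j, ENNReal.ofReal (Q i j) * g j
        = ENNReal.ofReal ρ * ∑' j, ENNReal.ofReal (u j) * g j := by
      simp_rw [← ENNReal.tsum_mul_left, ← mul_assoc]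
      rw [ENNReal.tsum_comm]
      simp_rw [ENNReal.tsum_mul_right, huQ]
    rw [matpowMulVec_succ hQ hQs hQr, ih, hQg, ← mul_assoc, ← ENNReal.ofReal_mul (pow_nonneg hρ n),
      pow_succ]

lemma hasSum_matpow_mul_eigenvector {v : ℕ+ → ℝ} (hv : ∀ j, 0 ≤ v j)
    (hv_eig : ∀ i, HasSum (fun j => Q i j * v j) (ρ * v i)) (n : ℕ) (i : ℕ+) :
    HasSum (fun j => matpow Q n i j * v j) (ρ ^ n * v i) := by
  refine hasSum_of_tsum_ofReal_eq (fun j => mul_nonneg (matpow_nonneg hQ n i j) (hv j))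
    (mul_nonneg (pow_nonneg hρ n) (hv i)) ?_
  simp_rw [ENNReal.ofReal_mul (matpow_nonneg hQ n i _)]
  exact matpowMulVec_eigenvector hQ hQs hQr hρ hv hv_eig n i

lemma hasSum_mul_rowSum {u : ℕ+ → ℝ} (hu : ∀ j, 0 ≤ u j)
    (hu_eig : ∀ j, HasSum (fun i => u i * Q i j) (ρ * u j)) (hu_sum : HasSum u 1) (n : ℕ) :
    HasSum (fun j => u j * rowSum Q n j) (ρ ^ n) := by
  refine hasSum_of_tsum_ofReal_eq (fun j => mul_nonneg (hu j) (rowSum_nonneg hQ n j))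
    (pow_nonneg hρ n) ?_
  simp_rw [ENNReal.ofReal_mul (hu _), ofReal_rowSum hQ hQs hQr,
    tsum_mul_matpowMulVec hQ hQs hQr hρ hu hu_eig, Pi.one_apply, mul_one,
    ← ENNReal.ofReal_tsum_of_nonneg hu hu_sum.summable, hu_sum.tsum_eq, ENNReal.ofReal_one,
    mul_one]

end Eigenvectors

section Paths

variable {Q : ℕ+ → ℕ+ → ℝ}

lemma lastState_snoc (i : ℕ+) {ℓ : ℕ} (y : Fin ℓ → ℕ+) (j : ℕ+) :
    lastState i (Fin.snoc y j : Fin (ℓ + 1) → ℕ+) = j := by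
  simp only [lastState, Nat.succ_ne_zero, dite_false]
  exact Fin.snoc_last _ _

lemma pathProd_snoc (i : ℕ+) {ℓ : ℕ} (y : Fin ℓ → ℕ+) (j : ℕ+) :
    pathProd Q i (Fin.snoc y j : Fin (ℓ + 1) → ℕ+) = pathProd Q i y * Q (lastState i y) j := by
  have hsnoc : ∀ (a : ℕ) (ha : a < ℓ),
      (Fin.snoc y j : Fin (ℓ + 1) → ℕ+) ⟨a, by omega⟩ = y ⟨a, ha⟩ :=
    fun a ha => Fin.snoc_castSucc (α := fun _ => ℕ+) j y ⟨a, ha⟩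
  rw [pathProd, Fin.prod_univ_castSucc, Fin.snoc_last]
  congr 1
  · refine Finset.prod_congr rfl fun w _ => ?_
    rw [Fin.snoc_castSucc]
    by_cases hw : w.val = 0
    · simp [hw]
    · simp only [Fin.val_castSucc, hw, dite_false]
      rw [hsnoc]
  · by_cases hℓ : ℓ = 0
    · subst hℓ; simp [lastState]
    · simp only [Fin.val_last, hℓ, dite_false, lastState]
      rw [hsnoc]

variable (hQ : ∀ i j, 0 ≤ Q i j) (hQs : ∀ i, Summable (Q i)) (hQr : ∀ i, ∑' j, Q i j ≤ 1)
include hQ hQs hQr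

lemma tsum_ofReal_pathProd_mul (ℓ : ℕ) (i : ℕ+) (g : ℕ+ → ℝ≥0∞) :
    ∑' x : Fin ℓ → ℕ+, ENNReal.ofReal (pathProd Q i x) * g (lastState i x)
      = matpowMulVec Q ℓ g i := by
  induction ℓ generalizing g with
  | zero =>
    rw [tsum_fintype, Fintype.sum_unique, matpowMulVec_zero]
    simp [pathProd, lastState]
  | succ ℓ ih =>
    rw [← (Fin.snocEquiv fun _ => ℕ+).tsum_eq, ENNReal.tsum_prod', ENNReal.tsum_comm,
      matpowMulVec_succ hQ hQs hQr, ← ih]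
    refine tsum_congr fun y => ?_
    change ∑' j, ENNReal.ofReal (pathProd Q i (Fin.snoc y j)) * g (lastState i (Fin.snoc y j)) = _
    simp_rw [pathProd_snoc, lastState_snoc,
      ENNReal.ofReal_mul (pathProd_nonneg hQ i y), mul_assoc, ENNReal.tsum_mul_left]

lemma hasSum_pathProd_mul {ℓ : ℕ} {i : ℕ+} {g : ℕ+ → ℝ} (hg : ∀ j, 0 ≤ g j)
    (hsum : Summable fun j => matpow Q ℓ i j * g j) :
    HasSum (fun x : Fin ℓ → ℕ+ => pathProd Q i x * g (lastState i x))
      (∑' j, matpow Q ℓ i j * g j) := by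
  refine hasSum_of_tsum_ofReal_eq (fun x => mul_nonneg (pathProd_nonneg hQ i x) (hg _))
    (tsum_nonneg fun j => mul_nonneg (matpow_nonneg hQ ℓ i j) (hg j)) ?_
  rw [ENNReal.ofReal_tsum_of_nonneg (fun j => mul_nonneg (matpow_nonneg hQ ℓ i j) (hg j)) hsum]
  simp_rw [ENNReal.ofReal_mul (pathProd_nonneg hQ i _), ENNReal.ofReal_mul (matpow_nonneg hQ ℓ i _)]
  exact tsum_ofReal_pathProd_mul hQ hQs hQr ℓ i fun j => ENNReal.ofReal (g j)

lemma tvDist_eq_tsum {ρ : ℝ} (hρ : 0 ≤ ρ) {v : ℕ+ → ℝ} (hv : ∀ j, 0 ≤ v j)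
    (hv_eig : ∀ i, HasSum (fun j => Q i j * v j) (ρ * v i)) (i : ℕ+) (ℓ n : ℕ) :
    tvDist Q ρ v i ℓ n = 1 / 2 * ∑' j, |matpow Q ℓ i j * rowSum Q (n - ℓ) j / rowSum Q n i
      - (ρ ^ ℓ)⁻¹ * (v i)⁻¹ * (matpow Q ℓ i j * v j)| := by
  set g := fun j => |rowSum Q (n - ℓ) j / rowSum Q n i - (ρ ^ ℓ)⁻¹ * (v i)⁻¹ * v j|
  have hfactor : ∀ w, 0 ≤ w → ∀ j, w * g j
      = |w * rowSum Q (n - ℓ) j / rowSum Q n i - (ρ ^ ℓ)⁻¹ * (v i)⁻¹ * (w * v j)| := by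
    intro w hw j
    rw [← abs_of_nonneg hw, ← abs_mul, abs_of_nonneg hw]
    ring_nf
  have hsum : Summable fun j => matpow Q ℓ i j * g j := by
    simp_rw [hfactor _ (matpow_nonneg hQ ℓ i _)]
    exact (((hasSum_matpow_mul_rowSum hQ hQs hQr ℓ (n - ℓ) i).summable.div_const _).sub
      ((hasSum_matpow_mul_eigenvector hQ hQs hQr hρ hv hv_eig ℓ i).summable.mul_left _)).abs
  rw [tvDist]
  congr 1
  calc ∑' x, |condPathLaw Q i n x - qPathLaw Q ρ v i x|
      = ∑' x, pathProd Q i x * g (lastState i x) :=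
        tsum_congr fun x => (hfactor _ (pathProd_nonneg hQ i x) _).symm
    _ = ∑' j, matpow Q ℓ i j * g j :=
        (hasSum_pathProd_mul hQ hQs hQr (fun j => abs_nonneg _) hsum).tsum_eq
    _ = _ := tsum_congr fun j => hfactor _ (matpow_nonneg hQ ℓ i j) j

end Paths

section Asymptotics

lemma abs_mul_div_sub_mul {a c : ℝ} (ha : 0 ≤ a) (hc : 0 < c) (x y : ℝ) :
    |a * x / c - a * y| = c⁻¹ * (a * |x - c * y|) := by
  rw [show a * x / c - a * y = c⁻¹ * (a * (x - c * y)) by field_simp, abs_mul, abs_mul,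
    abs_of_pos (inv_pos.2 hc), abs_of_nonneg ha]

variable {Q : ℕ+ → ℕ+ → ℝ} {ρ : ℝ} {u v : ℕ+ → ℝ} {i : ℕ+} (k : ℕ) (hρ : 0 < ρ) (hvi : 0 < v i)
  (hQn : ∀ j, Tendsto (fun m => matpow Q m i j / ρ ^ m) atTop (𝓝 (v i * u j)))
  (hRn : Tendsto (fun n => rowSum Q n i / ρ ^ n) atTop (𝓝 (v i)))

include hvi hQn in
lemma tendsto_matpow_mul_eigenvector_div (j : ℕ+) :
    Tendsto (fun n => (ρ ^ (n - k))⁻¹ * (v i)⁻¹ * (matpow Q (n - k) i j * v j)) atTop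
      (𝓝 (u j * v j)) := by
  have h := (((hQn j).comp (tendsto_sub_atTop_nat k)).mul_const (v j)).div_const (v i)
  rw [show v i * u j * v j / v i = u j * v j by field_simp] at h
  exact h.congr fun n => by simp only [Function.comp_apply]; ring

include hρ hvi hRn

lemma eventually_rowSum_pos : ∀ᶠ n in atTop, 0 < rowSum Q n i :=
  (hRn.eventually (lt_mem_nhds hvi)).mono fun n hn =>
    (div_pos_iff_of_pos_right (pow_pos hρ n)).1 hn

include hQn

lemma tendsto_matpow_mul_rowSum_div (j : ℕ+) :
    Tendsto (fun n => matpow Q (n - k) i j * rowSum Q k j / rowSum Q n i) atTop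
      (𝓝 (u j * rowSum Q k j / ρ ^ k)) := by
  have h := ((((hQn j).comp (tendsto_sub_atTop_nat k)).mul_const (rowSum Q k j)).div hRn
    hvi.ne').div_const (ρ ^ k)
  rw [show v i * u j * rowSum Q k j / v i / ρ ^ k = u j * rowSum Q k j / ρ ^ k by
    field_simp] at h
  refine h.congr' ?_
  filter_upwards [eventually_ge_atTop k, eventually_rowSum_pos hρ hvi hRn] with n hkn hpos
  obtain ⟨m, rfl⟩ := Nat.exists_eq_add_of_le' hkn
  simp only [Pi.div_apply, Function.comp_apply, Nat.add_sub_cancel, pow_add]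
  field_simp

variable (hQ : ∀ i j, 0 ≤ Q i j) (hQs : ∀ i, Summable (Q i)) (hQr : ∀ i, ∑' j, Q i j ≤ 1)
  (hu : ∀ j, 0 ≤ u j) (hv : ∀ j, 0 ≤ v j)
  (hu_eig : ∀ j, HasSum (fun i => u i * Q i j) (ρ * u j))
  (hv_eig : ∀ i, HasSum (fun j => Q i j * v j) (ρ * v i))
  (hu_sum : HasSum u 1) (huv_sum : HasSum (fun j => u j * v j) 1)
include hQ hQs hQr hu hv hu_eig hv_eig hu_sum huv_sum

lemma tendsto_tvDist_sub_of_tendsto_div_pow :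
    Tendsto (fun n => tvDist Q ρ v i (n - k) n) atTop
      (𝓝 ((ρ ^ k)⁻¹ / 2 * ∑' j, u j * |rowSum Q k j - ρ ^ k * v j|)) := by
  have ha_sum : ∀ᶠ n in atTop, ∑' j, matpow Q (n - k) i j * rowSum Q k j / rowSum Q n i = 1 := by
    filter_upwards [eventually_ge_atTop k, eventually_rowSum_pos hρ hvi hRn] with n hkn hpos
    rw [tsum_div_const, (hasSum_matpow_mul_rowSum hQ hQs hQr (n - k) k i).tsum_eq,
      Nat.sub_add_cancel hkn, div_self hpos.ne']
  have hb_sum : ∀ n, ∑' j, (ρ ^ (n - k))⁻¹ * (v i)⁻¹ * (matpow Q (n - k) i j * v j) = 1 :=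
    fun n => by
      rw [tsum_mul_left, (hasSum_matpow_mul_eigenvector hQ hQs hQr hρ.le hv hv_eig _ i).tsum_eq]
      field_simp [(pow_pos hρ (n - k)).ne']
  have ha'_sum : HasSum (fun j => u j * rowSum Q k j / ρ ^ k) 1 := by
    simpa [(pow_pos hρ k).ne'] using (hasSum_mul_rowSum hQ hQs hQr hρ.le hu hu_eig hu_sum k).div_const (ρ ^ k)
  have hlim := tendsto_tsum_abs_sub_of_tendsto_tsum
    (f := fun n j => matpow Q (n - k) i j * rowSum Q k j / rowSum Q n i)
    (g := fun n j => (ρ ^ (n - k))⁻¹ * (v i)⁻¹ * (matpow Q (n - k) i j * v j))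
    (fun n j => div_nonneg (mul_nonneg (matpow_nonneg hQ _ i j) (rowSum_nonneg hQ k j))
      (rowSum_nonneg hQ n i))
    (fun n j => mul_nonneg (mul_nonneg (inv_nonneg.2 (pow_pos hρ _).le) (inv_nonneg.2 hvi.le))
      (mul_nonneg (matpow_nonneg hQ _ i j) (hv j)))
    (fun n => (hasSum_matpow_mul_rowSum hQ hQs hQr (n - k) k i).summable.div_const _)
    (fun n => (hasSum_matpow_mul_eigenvector hQ hQs hQr hρ.le hv hv_eig _ i).summable.mul_left _)
    ha'_sum.summable huv_sum.summable
    (tendsto_matpow_mul_rowSum_div k hρ hvi hQn hRn) (tendsto_matpow_mul_eigenvector_div k hvi hQn)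
    (ha'_sum.tsum_eq ▸ tendsto_const_nhds.congr' (ha_sum.mono fun n h => h.symm))
    (huv_sum.tsum_eq ▸ tendsto_const_nhds.congr fun n => (hb_sum n).symm)
  rw [show (ρ ^ k)⁻¹ / 2 * ∑' j, u j * |rowSum Q k j - ρ ^ k * v j|
      = 1 / 2 * ∑' j, |u j * rowSum Q k j / ρ ^ k - u j * v j| by
    rw [tsum_congr fun j => abs_mul_div_sub_mul (hu j) (pow_pos hρ k) _ _, tsum_mul_left]; ring]
  refine (hlim.const_mul (1 / 2)).congr' ?_
  filter_upwards [eventually_ge_atTop k] with n hkn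
  rw [tvDist_eq_tsum hQ hQs hQr hρ.le hv hv_eig, Nat.sub_sub_self hkn]

end Asymptotics

theorem tvDist_tendsto_of_lag_general
    (Q : ℕ+ → ℕ+ → ℝ)
    (hQ_nonneg : ∀ i j, 0 ≤ Q i j)
    (hQ_summ : ∀ i, Summable (fun j => Q i j))
    (hQ_row : ∀ i, ∑' j, Q i j ≤ 1)
    (ρ : ℝ) (hρ : ρ ∈ Set.Ioo (0 : ℝ) 1)
    (u v : ℕ+ → ℝ) (hu_pos : ∀ j, 0 < u j) (hv_pos : ∀ j, 0 < v j)
    (hu_eig : ∀ j, HasSum (fun i : ℕ+ => u i * Q i j) (ρ * u j))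
    (hv_eig : ∀ i, HasSum (fun j : ℕ+ => Q i j * v j) (ρ * v i))
    (hu_sum : HasSum u 1) (huv_sum : HasSum (fun j => u j * v j) 1)
    (ν : ℕ)
    (K ε : ℝ) (hε : ε ∈ Set.Ioo (0 : ℝ) 1)
    (hS_entry : ∀ n, 1 ≤ n → ∀ i j : ℕ+,
      |matpow Q n i j - ρ ^ n * v i * u j| ≤ ((i : ℝ) ^ ν / (j : ℝ) ^ ν) * K * (1 - ε) ^ n * ρ ^ n)
    (hS_row : ∀ n, 1 ≤ n → ∀ i : ℕ+,
      |Sone Q ρ v u n i| ≤ (i : ℝ) ^ ν * K * (1 - ε) ^ n * ρ ^ n) :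
    ∀ i : ℕ+, ∀ k : ℕ, 1 ≤ k →
      Tendsto (fun n : ℕ => tvDist Q ρ v i (n - k) n) atTop
        (𝓝 ((ρ ^ k)⁻¹ / 2 * ∑' j : ℕ+, u j * |Sone Q ρ v u k j|)) := by
  intro i k _
  have hθ0 : 0 ≤ 1 - ε := by linarith [hε.2]
  have hθ1 : 1 - ε < 1 := by linarith [hε.1]
  have hQn : ∀ j, Tendsto (fun m => matpow Q m i j / ρ ^ m) atTop (𝓝 (v i * u j)) := fun j =>
    tendsto_div_pow_of_abs_sub_le (C := (i : ℝ) ^ ν / (j : ℝ) ^ ν * K) hρ.1 hθ0 hθ1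
      ((eventually_ge_atTop 1).mono fun m hm => by rw [← mul_assoc]; exact hS_entry m hm i j)
  have hRn : Tendsto (fun n => rowSum Q n i / ρ ^ n) atTop (𝓝 (v i)) :=
    tendsto_div_pow_of_abs_sub_le (C := (i : ℝ) ^ ν * K) hρ.1 hθ0 hθ1
      ((eventually_ge_atTop 1).mono fun n hn => by
        rw [← sone_eq_rowSum_sub hQ_nonneg hQ_summ hQ_row hu_sum]; exact hS_row n hn i)
  simpa only [sone_eq_rowSum_sub hQ_nonneg hQ_summ hQ_row hu_sum] using
    tendsto_tvDist_sub_of_tendsto_div_pow k hρ.1 (hv_pos i) hQn hRn hQ_nonneg hQ_summ hQ_row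
      (fun j => (hu_pos j).le) (fun j => (hv_pos j).le) hu_eig hv_eig hu_sum huv_sum

/-- Under the spectral hypothesis, for every fixed `k ≥ 1`,
`d_{n-k}^{(n)}(i) → (ρ^{-k}/2) ∑_j u_j |(S⁽ᵏ⁾𝟙)_j|` as `n → ∞`. -/
theorem tvDist_tendsto_of_lag
    (Q : ℕ+ → ℕ+ → ℝ)
    (hQ_nonneg : ∀ i j, 0 ≤ Q i j)
    (hQ_summ : ∀ i, Summable (fun j => Q i j))
    (hQ_row : ∀ i, ∑' j, Q i j ≤ 1)
    (ρ : ℝ) (hρ : ρ ∈ Set.Ioo (0 : ℝ) 1)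
    (u v : ℕ+ → ℝ) (hu_pos : ∀ j, 0 < u j) (hv_pos : ∀ j, 0 < v j)
    (hu_eig : ∀ j, HasSum (fun i : ℕ+ => u i * Q i j) (ρ * u j))
    (hv_eig : ∀ i, HasSum (fun j : ℕ+ => Q i j * v j) (ρ * v i))
    (hu_sum : HasSum u 1) (huv_sum : HasSum (fun j => u j * v j) 1)
    (ν : ℕ) (hν : 1 ≤ ν)
    (hu_mom : Summable (fun j : ℕ+ => (j : ℝ) ^ ν * u j))
    (hv_bdd : ∃ M : ℝ, ∀ j : ℕ+, v j / (j : ℝ) ^ ν ≤ M)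
    (K ε : ℝ) (hε : ε ∈ Set.Ioo (0 : ℝ) 1)
    (hS_entry : ∀ n, 1 ≤ n → ∀ i j : ℕ+,
      |matpow Q n i j - ρ ^ n * v i * u j| ≤ ((i : ℝ) ^ ν / (j : ℝ) ^ ν) * K * (1 - ε) ^ n * ρ ^ n)
    (hS_row : ∀ n, 1 ≤ n → ∀ i : ℕ+,
      |Sone Q ρ v u n i| ≤ (i : ℝ) ^ ν * K * (1 - ε) ^ n * ρ ^ n) :
    ∀ i : ℕ+, ∀ k : ℕ, 1 ≤ k →
      Tendsto (fun n : ℕ => tvDist Q ρ v i (n - k) n) atTop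
        (𝓝 ((ρ ^ k)⁻¹ / 2 * ∑' j : ℕ+, u j * |Sone Q ρ v u k j|)) :=
  tvDist_tendsto_of_lag_general Q hQ_nonneg hQ_summ hQ_row ρ hρ u v hu_pos hv_pos hu_eig hv_eig
    hu_sum huv_sum ν K ε hε hS_entry hS_row
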